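/- For the DM-MAC with degraded message sets, define 𝓛^max(ε;R₁*,R₂*) exactly as 𝓛(ε;R₁*,R₂*) but with the average error probability ε_n replaced by the maximal error probability ε_n^max = max_{m₁,m₂} Wⁿ({y : φ(y) ≠ (m₁,m₂)} | f₁(m₁,m₂), f₂(m₂)). Then for every ε ∈ (0,1) and every boundary point (R₁*,R₂*) of the capacity region 𝒞, 𝓛^max(ε;R₁*,R₂*) = 𝓛(ε;R₁*,R₂*). -/

import Mathlib

open MeasureTheory ProbabilityTheory Filter
open scoped Classical BigOperators

noncomputable section

/-- A function on a finite alphabet is a probability distribution. -/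
def IsDist {A : Type} [Fintype A] (P : A → ℝ) : Prop :=
  (∀ a, 0 ≤ P a) ∧ ∑ a, P a = 1

variable {X1 X2 Y : Type} [Fintype X1] [Fintype X2] [Fintype Y]

/-- The `n`-letter memoryless extension of the channel `W`. -/
def Wn (W : X1 → X2 → Y → ℝ) (n : ℕ) (x1 : Fin n → X1) (x2 : Fin n → X2)
    (y : Fin n → Y) : ℝ := ∏ i, W (x1 i) (x2 i) (y i)

/-- An `(n, M1, M2)` code for the MAC with degraded message sets. -/
structure MACCode (X1 X2 Y : Type) (n M1 M2 : ℕ) where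
  f1 : Fin M1 × Fin M2 → Fin n → X1
  f2 : Fin M2 → Fin n → X2
  dec : (Fin n → Y) → Fin M1 × Fin M2

/-- Error probability of the code for a fixed message pair `m`. -/
def errProb (W : X1 → X2 → Y → ℝ) {n M1 M2 : ℕ} (c : MACCode X1 X2 Y n M1 M2)
    (m : Fin M1 × Fin M2) : ℝ :=
  ∑ y : Fin n → Y, if c.dec y ≠ m then Wn W n (c.f1 m) (c.f2 m.2) y else 0

/-- Average error probability of a code. -/
def avgErr (W : X1 → X2 → Y → ℝ) {n M1 M2 : ℕ} (c : MACCode X1 X2 Y n M1 M2) : ℝ :=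
  (1 / ((M1 : ℝ) * (M2 : ℝ))) * ∑ m : Fin M1 × Fin M2, errProb W c m

/-- Output distribution `P_Y` induced by the input distribution `P` and the channel `W`. -/
def PYdist (W : X1 → X2 → Y → ℝ) (P : X1 × X2 → ℝ) (y : Y) : ℝ :=
  ∑ x : X1 × X2, P x * W x.1 x.2 y

/-- Conditional output distribution `P_{Y|X2}`. -/
def PYgX2 (W : X1 → X2 → Y → ℝ) (P : X1 × X2 → ℝ) (x2 : X2) (y : Y) : ℝ :=
  (∑ x1, P (x1, x2) * W x1 x2 y) / (∑ x1, P (x1, x2))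

/-- First information density `j₁(x₁,x₂,y) = log (W(y|x₁,x₂) / P_{Y|X₂}(y|x₂))`. -/
def j1 (W : X1 → X2 → Y → ℝ) (P : X1 × X2 → ℝ) (x1 : X1) (x2 : X2) (y : Y) : ℝ :=
  Real.log (W x1 x2 y / PYgX2 W P x2 y)

/-- Second information density `j₁₂(x₁,x₂,y) = log (W(y|x₁,x₂) / P_Y(y))`. -/
def j12 (W : X1 → X2 → Y → ℝ) (P : X1 × X2 → ℝ) (x1 : X1) (x2 : X2) (y : Y) : ℝ :=
  Real.log (W x1 x2 y / PYdist W P y)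

/-- The information density vector. -/
def jv (W : X1 → X2 → Y → ℝ) (P : X1 × X2 → ℝ) (x1 : X1) (x2 : X2) (y : Y) :
    Fin 2 → ℝ := ![j1 W P x1 x2 y, j12 W P x1 x2 y]

/-- Mutual information `I₁(P) = I(X₁;Y|X₂)`. -/
def I1 (W : X1 → X2 → Y → ℝ) (P : X1 × X2 → ℝ) : ℝ :=
  ∑ x : X1 × X2, ∑ y, P x * W x.1 x.2 y * j1 W P x.1 x.2 y

/-- Mutual information `I₁₂(P) = I(X₁,X₂;Y)`. -/
def I12 (W : X1 → X2 → Y → ℝ) (P : X1 × X2 → ℝ) : ℝ :=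
  ∑ x : X1 × X2, ∑ y, P x * W x.1 x.2 y * j12 W P x.1 x.2 y

/-- Conditional mean of the information density vector given `(x₁,x₂)`. -/
def condMean (W : X1 → X2 → Y → ℝ) (P : X1 × X2 → ℝ) (x1 : X1) (x2 : X2)
    (a : Fin 2) : ℝ := ∑ y, W x1 x2 y * jv W P x1 x2 y a

/-- Dispersion matrix `V(P) = E[Cov(j(X₁,X₂,Y) | X₁,X₂)]`. -/
def Vmat (W : X1 → X2 → Y → ℝ) (P : X1 × X2 → ℝ) : Matrix (Fin 2) (Fin 2) ℝ :=
  fun a b => ∑ x : X1 × X2, P x * ∑ y, W x.1 x.2 y *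
    ((jv W P x.1 x.2 y a - condMean W P x.1 x.2 a) *
     (jv W P x.1 x.2 y b - condMean W P x.1 x.2 b))

/-- The capacity region of the DM-MAC with degraded message sets. -/
def CapRegion (W : X1 → X2 → Y → ℝ) : Set (ℝ × ℝ) :=
  {R | 0 ≤ R.1 ∧ 0 ≤ R.2 ∧ ∃ P : X1 × X2 → ℝ, IsDist P ∧
    R.1 ≤ I1 W P ∧ R.1 + R.2 ≤ I12 W P}

end

noncomputable section

/-- The standard Gaussian measure on `ℝ²`. -/
def stdGaussian2 : Measure (Fin 2 → ℝ) :=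
  MeasureTheory.Measure.pi fun _ => gaussianReal 0 1

/-- The positive semidefinite square root (definition of the former `Matrix.PosSemidef.sqrt`). -/
def psdSqrt {V : Matrix (Fin 2) (Fin 2) ℝ} (hV : V.PosSemidef) : Matrix (Fin 2) (Fin 2) ℝ :=
  hV.1.eigenvectorUnitary.1 * Matrix.diagonal ((↑) ∘ (√·) ∘ hV.1.eigenvalues) *
    (star hV.1.eigenvectorUnitary : Matrix (Fin 2) (Fin 2) ℝ)

/-- `Ψ(z; V)`: probability that a centered Gaussian vector with covariance `V`
(the law of `V^{1/2} Z` for standard Gaussian `Z`) lies in `{u : u₁ ≤ z₁, u₂ ≤ z₂}`. -/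
def Psi (V : Matrix (Fin 2) (Fin 2) ℝ) (z : ℝ × ℝ) : ℝ :=
  if hV : V.PosSemidef then
    ((stdGaussian2.map (fun u => (psdSqrt hV).mulVec u)) {w | w 0 ≤ z.1 ∧ w 1 ≤ z.2}).toReal
  else 0

/-- `Ψ⁻¹(V, ε) = {z ∈ ℝ² : Ψ(-z₁, -z₂; V) ≥ 1 - ε}`. -/
def PsiInv (V : Matrix (Fin 2) (Fin 2) ℝ) (ε : ℝ) : Set (ℝ × ℝ) :=
  {z | 1 - ε ≤ Psi V (-z.1, -z.2)}

/-- The standard normal CDF `Φ`. -/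
def Phi (x : ℝ) : ℝ := ((gaussianReal 0 1) (Set.Iic x)).toReal

/-- The inverse `Φ⁻¹` of the standard normal CDF. -/
def PhiInv (ε : ℝ) : ℝ := sSup {x | Phi x ≤ ε}

end
noncomputable section
variable {X1 X2 Y : Type} [Fintype X1] [Fintype X2] [Fintype Y]

/-- `(L₁, L₂)` is `(ε, R₁*, R₂*)`-achievable: there is a sequence of codes with
`liminf (log M_{j,n} - n R_j*)/√n ≥ L_j` for `j = 1,2` and `limsup ε_n ≤ ε`. -/
def SOAchievable (W : X1 → X2 → Y → ℝ) (ε R1s R2s : ℝ) (L : ℝ × ℝ) : Prop :=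
  ∃ (M1 M2 : ℕ → ℕ) (c : ∀ n, MACCode X1 X2 Y n (M1 n) (M2 n)),
    ((L.1 : EReal) ≤ Filter.liminf
      (fun n : ℕ => (((Real.log (M1 n) - n * R1s) / Real.sqrt n : ℝ) : EReal))
      Filter.atTop) ∧
    ((L.2 : EReal) ≤ Filter.liminf
      (fun n : ℕ => (((Real.log (M2 n) - n * R2s) / Real.sqrt n : ℝ) : EReal))
      Filter.atTop) ∧
    Filter.limsup (fun n : ℕ => ((avgErr W (c n) : ℝ) : EReal)) Filter.atTop ≤ (ε : EReal)

/-- The `(ε, R₁*, R₂*)`-optimal second-order coding rate region: the closure of the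
set of `(ε, R₁*, R₂*)`-achievable pairs. -/
def SORegion (W : X1 → X2 → Y → ℝ) (ε R1s R2s : ℝ) : Set (ℝ × ℝ) :=
  closure {L : ℝ × ℝ | SOAchievable W ε R1s R2s L}

end
noncomputable section
variable {X1 X2 Y : Type} [Fintype X1] [Fintype X2] [Fintype Y]

/-- Maximal error probability of a code. -/
def maxErr (W : X1 → X2 → Y → ℝ) {n M1 M2 : ℕ} (c : MACCode X1 X2 Y n M1 M2) : ℝ :=
  ⨆ m : Fin M1 × Fin M2, errProb W c m

/-- `(L₁, L₂)` is `(ε, R₁*, R₂*)`-achievable under the maximal error criterion. -/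
def SOAchievableMax (W : X1 → X2 → Y → ℝ) (ε R1s R2s : ℝ) (L : ℝ × ℝ) : Prop :=
  ∃ (M1 M2 : ℕ → ℕ) (c : ∀ n, MACCode X1 X2 Y n (M1 n) (M2 n)),
    ((L.1 : EReal) ≤ Filter.liminf
      (fun n : ℕ => (((Real.log (M1 n) - n * R1s) / Real.sqrt n : ℝ) : EReal))
      Filter.atTop) ∧
    ((L.2 : EReal) ≤ Filter.liminf
      (fun n : ℕ => (((Real.log (M2 n) - n * R2s) / Real.sqrt n : ℝ) : EReal))
      Filter.atTop) ∧
    Filter.limsup (fun n : ℕ => ((maxErr W (c n) : ℝ) : EReal)) Filter.atTop ≤ (ε : EReal)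

/-- The second-order region under the maximal error probability criterion. -/
def SORegionMax (W : X1 → X2 → Y → ℝ) (ε R1s R2s : ℝ) : Set (ℝ × ℝ) :=
  closure {L : ℝ × ℝ | SOAchievableMax W ε R1s R2s L}

end

/-! Every maximal-error code is an average-error code. Conversely, an average-error code is
expurgated twice with Markov's inequality: keep a `1/(n+2)` fraction of the common messages `m₂`
whose average error over `m₁` is at most `(n+2)/(n+1)` times the overall average, and for each
of them a `1/(n+2)` fraction of the private messages `m₁` whose error is at most `(n+2)/(n+1)`
times that row average. The surviving subcode has maximal error at most `((n+2)/(n+1))²` times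
the original average error, and each rate loses only `log (n+2) = o(√n)` nats, which is
invisible at second order. -/

open Finset

lemma card_le_mul_card_filter_le_avg {α : Type*} [Fintype α] {f : α → ℝ} (hf : ∀ a, 0 ≤ f a) {s : ℝ} (hs : 0 < s) :
    (Fintype.card α : ℝ) ≤
      (s + 1) * #{a | f a ≤ (1 + 1 / s) * ((∑ b, f b) / Fintype.card α)} := by
  set N : ℝ := (Fintype.card α : ℝ)
  set A := (∑ b, f b) / N
  set good : Finset α := {a | f a ≤ (1 + 1 / s) * A}
  set bad : Finset α := {a | ¬ f a ≤ (1 + 1 / s) * A}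
  have hsplit : (#good : ℝ) + #bad = N := by
    rw [← Nat.cast_add, card_filter_add_card_filter_not, card_univ]
  have hA : 0 ≤ A := div_nonneg (sum_nonneg fun a _ => hf a) (by positivity)
  rcases bad.eq_empty_or_nonempty with hbad | ⟨a, ha⟩
  · rw [hbad, card_empty, Nat.cast_zero, add_zero] at hsplit
    rw [hsplit]
    nlinarith [Nat.cast_nonneg (α := ℝ) (Fintype.card α)]
  have hN : (0 : ℝ) < N := Nat.cast_pos.2 (Fintype.card_pos_iff.2 ⟨a⟩)
  have hsum : ∑ b, f b = N * A := by rw [mul_div_cancel₀ _ hN.ne']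
  have hmarkov : #bad * ((1 + 1 / s) * A) ≤ N * A := by
    rw [← hsum, ← nsmul_eq_mul]
    refine (card_nsmul_le_sum bad f _ fun b hb => ?_).trans (sum_le_univ_sum_of_nonneg hf)
    exact (not_le.1 (mem_filter.1 hb).2).le
  have hApos : 0 < A := by
    refine hA.lt_of_ne fun h0 => ?_
    have : f a ≤ N * A := hsum ▸ single_le_sum (fun b _ => hf b) (mem_univ a)
    exact (mem_filter.1 ha).2 (by rw [← h0] at this ⊢; simpa using this)
  have hbad : (#bad : ℝ) * (1 + 1 / s) ≤ #good + #bad :=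
    hsplit ▸ le_of_mul_le_mul_right (by linarith) hApos
  have : (#bad : ℝ) ≤ s * #good := by
    field_simp at hbad
    linarith
  linarith

lemma Nat.ceil_div_le_of_le_mul {x y : ℝ} {k : ℕ} (hy : 0 < y) (h : x ≤ y * k) :
    ⌈x / y⌉₊ ≤ k :=
  Nat.ceil_le.2 <| (div_le_iff₀ hy).2 (by linarith)

lemma Finset.exists_embedding_fin_mem {α : Type*} {s : Finset α} {k : ℕ} (h : k ≤ #s) :
    ∃ σ : Fin k ↪ α, ∀ i, σ i ∈ s := by
  obtain ⟨t, hts, rfl⟩ := exists_subset_card_eq h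
  exact ⟨t.equivFin.symm.toEmbedding.trans (.subtype _), fun i => hts (t.equivFin.symm i).2⟩

lemma Function.Injective.exists_leftInverse_of_nonempty {α β : Type*} {ι : α → β}
    (hι : ι.Injective) [Nonempty (β → α)] : ∃ ρ : β → α, LeftInverse ρ ι :=
  ⟨extend ι id (Classical.arbitrary _), hι.extend_apply _ _⟩

section Asymptotics

open Real Asymptotics Topology

lemma tendsto_log_add_div_sqrt_atTop (c : ℝ) :
    Tendsto (fun x => log (x + c) / √x) atTop (𝓝 0) := by
  have hc : Tendsto (fun x : ℝ => x + c) atTop atTop := tendsto_atTop_add_const_right _ c tendsto_id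
  have hlog : (fun x => log (x + c)) =o[atTop] fun x => √(x + c) :=
    ((isLittleO_log_rpow_atTop one_half_pos).comp_tendsto hc).congr_right fun x =>
      (sqrt_eq_rpow _).symm
  have hsqrt : (fun x => √(x + c)) =O[atTop] fun x => √x :=
    ((isBigO_refl _ _).add (isLittleO_const_id_atTop c).isBigO).sqrt
      (eventually_ge_atTop 0)
  exact (hlog.trans_isBigO hsqrt).tendsto_div_nhds_zero

lemma tendsto_log_natCast_add_div_sqrt (c : ℝ) :
    Tendsto (fun n : ℕ => log (n + c) / √n) atTop (𝓝 0) :=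
  (tendsto_log_add_div_sqrt_atTop c).comp tendsto_natCast_atTop_atTop

lemma log_sub_log_le_log_ceil_div (M : ℕ) {t : ℝ} (ht : 1 ≤ t) :
    log M - log t ≤ log ⌈M / t⌉₊ := by
  rcases M.eq_zero_or_pos with rfl | hM
  · simp [log_nonneg ht]
  rw [← log_div (by positivity) (by positivity)]
  exact log_le_log (by positivity) (Nat.le_ceil _)

variable {ι : Type*} {l : Filter ι} [l.NeBot] {u v w : ι → ℝ}

lemma EReal.limsup_coe_le_of_le_add {a : EReal} (hu : limsup (fun i => (u i : EReal)) l ≤ a)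
    (hv : Tendsto v l (𝓝 0)) (hw : ∀ i, w i ≤ u i + v i) :
    limsup (fun i => (w i : EReal)) l ≤ a := by
  have hv0 : limsup (fun i => (v i : EReal)) l = 0 := (EReal.tendsto_coe.2 hv).limsup_eq
  calc limsup (fun i => (w i : EReal)) l
      ≤ limsup ((fun i => (u i : EReal)) + fun i => (v i : EReal)) l :=
        limsup_le_limsup (.of_forall fun i => by
          simpa only [Pi.add_apply, ← EReal.coe_add, EReal.coe_le_coe_iff] using hw i)
    _ ≤ limsup (fun i => (u i : EReal)) l + limsup (fun i => (v i : EReal)) l :=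
        EReal.limsup_add_le (.inr (by simp [hv0])) (.inr (by simp [hv0]))
    _ ≤ a := by rwa [hv0, add_zero]

lemma EReal.le_liminf_coe_of_sub_le {a : EReal} (hu : a ≤ liminf (fun i => (u i : EReal)) l)
    (hv : Tendsto v l (𝓝 0)) (hw : ∀ i, u i - v i ≤ w i) :
    a ≤ liminf (fun i => (w i : EReal)) l := by
  have hv0 : liminf (fun i => ((-v i : ℝ) : EReal)) l = 0 :=
    (EReal.tendsto_coe.2 (by simpa using hv.neg)).liminf_eq
  calc a ≤ liminf (fun i => (u i : EReal)) l + liminf (fun i => ((-v i : ℝ) : EReal)) l := by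
        rwa [hv0, add_zero]
    _ ≤ liminf ((fun i => (u i : EReal)) + fun i => ((-v i : ℝ) : EReal)) l := EReal.le_liminf_add
    _ ≤ liminf (fun i => (w i : EReal)) l :=
        liminf_le_liminf (.of_forall fun i => by
          simpa only [Pi.add_apply, ← EReal.coe_add, ← sub_eq_add_neg, EReal.coe_le_coe_iff]
            using hw i)

end Asymptotics

section Codes

variable {X1 X2 Y : Type} {W : X1 → X2 → Y → ℝ} {n M1 M2 : ℕ}

lemma Wn_nonneg (hW : ∀ x1 x2 y, 0 ≤ W x1 x2 y) (x1 : Fin n → X1) (x2 : Fin n → X2)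
    (y : Fin n → Y) : 0 ≤ Wn W n x1 x2 y :=
  prod_nonneg fun _ _ => hW _ _ _

variable [Fintype Y]

lemma sum_Wn (hW : ∀ x1 x2, IsDist (W x1 x2)) (x1 : Fin n → X1) (x2 : Fin n → X2) :
    ∑ y, Wn W n x1 x2 y = 1 := by
  unfold Wn
  rw [← Fintype.piFinset_univ, ← prod_univ_sum]
  exact prod_eq_one fun i _ => (hW _ _).2

lemma errProb_nonneg (hW : ∀ x1 x2 y, 0 ≤ W x1 x2 y) (c : MACCode X1 X2 Y n M1 M2)
    (m : Fin M1 × Fin M2) : 0 ≤ errProb W c m :=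
  sum_nonneg fun y _ => by split_ifs <;> simp [Wn_nonneg hW]

lemma errProb_le_one (hW : ∀ x1 x2, IsDist (W x1 x2)) (c : MACCode X1 X2 Y n M1 M2)
    (m : Fin M1 × Fin M2) : errProb W c m ≤ 1 :=
  calc errProb W c m ≤ ∑ y, Wn W n (c.f1 m) (c.f2 m.2) y :=
        sum_le_sum fun y _ => by split_ifs <;> simp [Wn_nonneg fun x1 x2 => (hW x1 x2).1]
    _ = 1 := sum_Wn hW _ _

lemma avgErr_nonneg (hW : ∀ x1 x2 y, 0 ≤ W x1 x2 y) (c : MACCode X1 X2 Y n M1 M2) :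
    0 ≤ avgErr W c :=
  mul_nonneg (by positivity) (sum_nonneg fun m _ => errProb_nonneg hW c m)

lemma avgErr_eq_sum_div (c : MACCode X1 X2 Y n M1 M2) :
    avgErr W c = (∑ m, errProb W c m) / (M1 * M2) := by
  rw [avgErr, one_div_mul_eq_div]

lemma avgErr_le_one (hW : ∀ x1 x2, IsDist (W x1 x2)) (c : MACCode X1 X2 Y n M1 M2) :
    avgErr W c ≤ 1 := by
  rw [avgErr_eq_sum_div]
  refine div_le_one_of_le₀ ?_ (by positivity)
  calc ∑ m, errProb W c m ≤ ∑ _m : Fin M1 × Fin M2, (1 : ℝ) :=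
        sum_le_sum fun m _ => errProb_le_one hW c m
    _ = M1 * M2 := by simp

lemma avgErr_le_maxErr (c : MACCode X1 X2 Y n M1 M2) : avgErr W c ≤ maxErr W c := by
  rcases isEmpty_or_nonempty (Fin M1 × Fin M2) with h | h
  · simp [avgErr, maxErr]
  obtain ⟨m1, m2⟩ := h.some
  have : (0 : ℝ) < M1 * M2 := by have := m1.pos; have := m2.pos; positivity
  rw [avgErr_eq_sum_div, div_le_iff₀ this]
  calc ∑ m, errProb W c m ≤ ∑ _m : Fin M1 × Fin M2, maxErr W c :=
        sum_le_sum fun m _ => le_ciSup (Set.finite_range _).bddAbove m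
    _ = maxErr W c * (M1 * M2) := by simp [mul_comm]

end Codes

namespace MACCode

variable {X1 X2 Y : Type} {n M1 M2 K1 K2 : ℕ}

def restrict (c : MACCode X1 X2 Y n M1 M2) (σ : Fin K2 → Fin M2) (τ : Fin M2 → Fin K1 → Fin M1)
    (ρ : Fin M1 × Fin M2 → Fin K1 × Fin K2) : MACCode X1 X2 Y n K1 K2 where
  f1 p := c.f1 (τ (σ p.2) p.1, σ p.2)
  f2 := c.f2 ∘ σ
  dec := ρ ∘ c.dec

lemma errProb_restrict_le [Fintype Y] {W : X1 → X2 → Y → ℝ} (hW : ∀ x1 x2 y, 0 ≤ W x1 x2 y)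
    (c : MACCode X1 X2 Y n M1 M2) (σ : Fin K2 → Fin M2) (τ : Fin M2 → Fin K1 → Fin M1)
    (ρ : Fin M1 × Fin M2 → Fin K1 × Fin K2) (p : Fin K1 × Fin K2)
    (hρ : ρ (τ (σ p.2) p.1, σ p.2) = p) :
    errProb W (c.restrict σ τ ρ) p ≤ errProb W c (τ (σ p.2) p.1, σ p.2) := by
  refine sum_le_sum fun y _ => ?_
  by_cases hy : c.dec y = (τ (σ p.2) p.1, σ p.2)
  · simp [restrict, hy, hρ]
  · by_cases h : ρ (c.dec y) = p <;> simp [restrict, h, hy, Wn_nonneg hW]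

end MACCode

section Expurgation

variable {X1 X2 Y : Type} [Fintype Y] {W : X1 → X2 → Y → ℝ} {n M1 M2 : ℕ}

theorem MACCode.exists_maxErr_le (hW : ∀ x1 x2 y, 0 ≤ W x1 x2 y) (c : MACCode X1 X2 Y n M1 M2)
    {s : ℝ} (hs : 0 < s) :
    ∃ c' : MACCode X1 X2 Y n ⌈(M1 : ℝ) / (s + 1)⌉₊ ⌈(M2 : ℝ) / (s + 1)⌉₊,
      maxErr W c' ≤ (1 + 1 / s) ^ 2 * avgErr W c := by
  set r := 1 + 1 / s
  set e : Fin M2 → ℝ := fun b => (∑ a, errProb W c (a, b)) / M1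
  have he : (∑ b, e b) / M2 = avgErr W c := by
    rw [avgErr_eq_sum_div, Fintype.sum_prod_type_right, ← sum_div, div_div]
  have hcols : (M2 : ℝ) ≤ (s + 1) * #({b | e b ≤ r * avgErr W c} : Finset (Fin M2)) := by
    have := card_le_mul_card_filter_le_avg (f := e)
      (fun b => div_nonneg (sum_nonneg fun a _ => errProb_nonneg hW c (a, b)) M1.cast_nonneg) hs
    rwa [Fintype.card_fin, he] at this
  have hrows : ∀ b, (M1 : ℝ) ≤
      (s + 1) * #({a | errProb W c (a, b) ≤ r * e b} : Finset (Fin M1)) := fun b => by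
    have := card_le_mul_card_filter_le_avg (fun a => errProb_nonneg hW c (a, b)) hs
    rwa [Fintype.card_fin] at this
  obtain ⟨σ, hσ⟩ := exists_embedding_fin_mem (Nat.ceil_div_le_of_le_mul (by linarith) hcols)
  choose τ hτ using fun b =>
    exists_embedding_fin_mem (Nat.ceil_div_le_of_le_mul (by linarith) (hrows b))
  have hι : Function.Injective fun p : Fin _ × Fin _ => (τ (σ p.2) p.1, σ p.2) := by
    rintro ⟨a, b⟩ ⟨a', b'⟩ h
    obtain ⟨ha, rfl⟩ : τ (σ b) a = τ (σ b') a' ∧ b = b' := by simpa using h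
    simpa using ha
  -- the subcode's decoder must also map messages outside the subcode somewhere
  have : Nonempty (Fin M1 × Fin M2 → Fin ⌈(M1 : ℝ) / (s + 1)⌉₊ × Fin ⌈(M2 : ℝ) / (s + 1)⌉₊) :=
    ⟨fun m => (⟨0, Nat.ceil_pos.2 (div_pos (Nat.cast_pos.2 m.1.pos) (by linarith))⟩,
      ⟨0, Nat.ceil_pos.2 (div_pos (Nat.cast_pos.2 m.2.pos) (by linarith))⟩)⟩
  obtain ⟨ρ, hρ⟩ := hι.exists_leftInverse_of_nonempty
  refine ⟨c.restrict σ (τ · ·) ρ, Real.iSup_le (fun p => ?_) (by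
    have := avgErr_nonneg hW c; positivity)⟩
  calc errProb W (c.restrict σ (τ · ·) ρ) p ≤ errProb W c (τ (σ p.2) p.1, σ p.2) :=
        c.errProb_restrict_le hW _ _ _ p (hρ p)
    _ ≤ r * e (σ p.2) := by simpa using hτ (σ p.2) p.1
    _ ≤ r * (r * avgErr W c) := by gcongr; simpa [he] using hσ p.2
    _ = r ^ 2 * avgErr W c := by ring

end Expurgation

section Achievability

open Real Topology

variable {X1 X2 Y : Type} [Fintype Y] {W : X1 → X2 → Y → ℝ} {ε R1s R2s : ℝ} {L : ℝ × ℝ}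

lemma SOAchievableMax.soAchievable (h : SOAchievableMax W ε R1s R2s L) :
    SOAchievable W ε R1s R2s L := by
  obtain ⟨M1, M2, c, h1, h2, h3⟩ := h
  exact ⟨M1, M2, c, h1, h2, (limsup_le_limsup (.of_forall fun n =>
    EReal.coe_le_coe_iff.2 (avgErr_le_maxErr (c n)))).trans h3⟩

lemma secondOrderRate_sub_le_ceil_div (M : ℕ) (R : ℝ) (n : ℕ) :
    (log M - n * R) / √n - log (n + 2) / √n ≤ (log ⌈(M : ℝ) / (n + 1 + 1)⌉₊ - n * R) / √n := by
  rw [← sub_div]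
  refine div_le_div_of_nonneg_right ?_ (sqrt_nonneg _)
  have := log_sub_log_le_log_ceil_div M (t := n + 1 + 1) (by linarith [n.cast_nonneg (α := ℝ)])
  rw [add_assoc, one_add_one_eq_two] at this ⊢
  linarith

lemma SOAchievable.soAchievableMax (hW : ∀ x1 x2, IsDist (W x1 x2))
    (h : SOAchievable W ε R1s R2s L) : SOAchievableMax W ε R1s R2s L := by
  obtain ⟨M1, M2, c, h1, h2, h3⟩ := h
  choose c' hc' using fun n : ℕ =>
    (c n).exists_maxErr_le (fun x1 x2 => (hW x1 x2).1) (s := n + 1) (by positivity)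
  have hloss : Tendsto (fun n : ℕ => (1 + 1 / ((n : ℝ) + 1)) ^ 2 - 1) atTop (𝓝 0) := by
    have := ((tendsto_const_nhds (x := (1 : ℝ))).add
      tendsto_one_div_add_atTop_nhds_zero_nat).pow 2 |>.sub_const 1
    simpa using this
  refine ⟨fun n => ⌈(M1 n : ℝ) / (n + 1 + 1)⌉₊, fun n => ⌈(M2 n : ℝ) / (n + 1 + 1)⌉₊, c',
    ?_, ?_, ?_⟩
  · exact EReal.le_liminf_coe_of_sub_le h1 (tendsto_log_natCast_add_div_sqrt 2)
      fun n => secondOrderRate_sub_le_ceil_div (M1 n) R1s n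
  · exact EReal.le_liminf_coe_of_sub_le h2 (tendsto_log_natCast_add_div_sqrt 2)
      fun n => secondOrderRate_sub_le_ceil_div (M2 n) R2s n
  refine EReal.limsup_coe_le_of_le_add h3 hloss fun n => (hc' n).trans ?_
  have hr : 1 ≤ (1 + 1 / ((n : ℝ) + 1)) ^ 2 := one_le_pow₀ (le_add_of_nonneg_right (by positivity))
  nlinarith [mul_nonneg (sub_nonneg.2 hr) (sub_nonneg.2 (avgErr_le_one hW (c n)))]

end Achievability

theorem SORegion_max_eq_avg_general {X1 X2 Y : Type} [Fintype Y]
    (W : X1 → X2 → Y → ℝ) (hW : ∀ x1 x2, IsDist (W x1 x2))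
    (ε : ℝ) (R1s R2s : ℝ) :
    SORegionMax W ε R1s R2s = SORegion W ε R1s R2s := by
  unfold SORegionMax SORegion
  congr 1
  ext L
  exact ⟨SOAchievableMax.soAchievable, SOAchievable.soAchievableMax hW⟩

/-- **Reduction from average to maximal error**: for the DM-MAC with degraded message
sets, the second-order regions under the maximal and average error criteria coincide at
every boundary point of the capacity region, for every `ε ∈ (0,1)`. -/
theorem SORegion_max_eq_avg {X1 X2 Y : Type} [Fintype X1] [Fintype X2] [Fintype Y]
    (W : X1 → X2 → Y → ℝ) (hW : ∀ x1 x2, IsDist (W x1 x2))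
    (ε : ℝ) (hε : ε ∈ Set.Ioo (0 : ℝ) 1) (R1s R2s : ℝ)
    (hbd : (R1s, R2s) ∈ CapRegion W ∧ (R1s, R2s) ∉ interior (CapRegion W)) :
    SORegionMax W ε R1s R2s = SORegion W ε R1s R2s :=
  SORegion_max_eq_avg_general W hW ε R1s R2s
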